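/- For n ≥ 3 and m ≥ 2, the numbers b_{n,m,r,ℓ} satisfy b_{n,m,1,ℓ} = Σ_{i=1}^{n−m} Σ_{j=0}^{t} b_{n−j−1, m−1, i−j, ℓ−j}, where t = min{i−1, ℓ−1}. -/

import Mathlib

/-- Number of ascents of a sequence of non-negative integers:
indices `j` with `x j < x (j+1)`. -/
def ascents (l : List ℕ) : ℕ :=
  ((l.zip l.tail).filter (fun p => p.1 < p.2)).length

/-- `x` is an ascent sequence: it starts with 0 and each subsequent letter is at most
one more than the number of ascents of the preceding prefix. -/
def IsAscentSeq (x : List ℕ) : Prop :=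
  (∀ h : 0 < x.length, x.get ⟨0, h⟩ = 0) ∧
  ∀ i : Fin x.length, 0 < (i : ℕ) → x.get i ≤ ascents (x.take (i : ℕ)) + 1

/-- `p` contains the pattern `t`: `p` has a subsequence order-isomorphic to `t`. -/
def Contains (p t : List ℕ) : Prop :=
  ∃ f : Fin t.length → Fin p.length, StrictMono f ∧
    ∀ i j : Fin t.length, t.get i < t.get j ↔ p.get (f i) < p.get (f j)

/-- `p` avoids the pattern `t`. -/
def Avoids (p t : List ℕ) : Prop := ¬ Contains p t

/-- `fwd x` is the length of the maximal final weakly decreasing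
run of consecutive letters at the end of `x`. -/
def fwd (x : List ℕ) : ℕ :=
  Nat.findGreatest
    (fun k => (x.drop (x.length - k)).IsChain (fun a b => b ≤ a)) x.length

/-- `bseq n m r ℓ` is the number of ascent sequences of length `n` avoiding `0012`,
not ending in the letter `0`, with exactly `m` ascents, exactly `r` zeros, and
`fwd` value `ℓ`. -/
noncomputable def bseq (n m r ℓ : ℕ) : ℕ :=
  {x : List ℕ | x.length = n ∧ IsAscentSeq x ∧ Avoids x [0, 0, 1, 2] ∧
    x.getLast? ≠ some 0 ∧ ascents x = m ∧ x.count 0 = r ∧ fwd x = ℓ}.ncard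

/-!
Write an ascent sequence with a single zero as `0 (z + 1) 1^j`, where `1^j` is its maximal run
of trailing ones; when it has at least two ascents, `z` is a nonempty ascent sequence not ending
in `0`. This decomposition is a bijection onto such pairs `(j, z)`: it shifts the length by
`j + 1`, the number of ascents by `1` and `fwd` by `j`, the ones of the sequence are the zeros of
`z` together with the trailing ones, and it neither creates nor destroys an occurrence of `0012`
(the lone `0` and the trailing ones cannot take part in one). Sorting by the number `i` of ones
and `j` of trailing ones gives the recurrence; the bounds of the sums come from
`zeros z ≥ 1`, `fwd z ≥ 1` and `zeros z + asc z ≤ |z|`.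
-/

open scoped List

lemma strictMono_add_one : StrictMono (· + 1 : ℕ → ℕ) := fun _ _ => Nat.succ_lt_succ

lemma sublist_left_of_append_singleton_sublist_append {α : Type*} {s l r : List α} {c : α}
    (h : s ++ [c] <+ l ++ r) (hc : c ∉ r) : s ++ [c] <+ l := by
  obtain ⟨l₁, l₂, heq, h₁, h₂⟩ := List.sublist_append_iff.1 h
  rcases l₂.eq_nil_or_concat with rfl | ⟨L, d, rfl⟩
  · simpa [heq] using h₁
  · rw [List.concat_eq_append, ← List.append_assoc] at heq
    obtain ⟨-, hcd⟩ := List.append_inj' heq rfl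
    exact absurd (h₂.subset (by simp [List.singleton_inj.1 hcd])) hc

lemma Set.ncard_eq_sum_ncard_fiber {α β : Type*} [DecidableEq β] {s : Set α} (hs : s.Finite)
    {g : α → β} {t : Finset β} (hg : ∀ x ∈ s, g x ∈ t) :
    s.ncard = ∑ b ∈ t, (s ∩ {x | g x = b}).ncard := by
  rw [Set.ncard_eq_toFinset_card s hs,
    Finset.card_eq_sum_card_fiberwise (fun x hx => hg x (hs.mem_toFinset.1 hx))]
  refine Finset.sum_congr rfl fun b _ => ?_
  rw [← Set.ncard_coe_finset]
  congr 1
  ext x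
  simp

@[simp] lemma ascents_nil : ascents [] = 0 := rfl

lemma ascents_cons_cons (a b : ℕ) (t : List ℕ) :
    ascents (a :: b :: t) = ascents (b :: t) + if a < b then 1 else 0 := by
  simp only [ascents, List.tail_cons, List.zip_cons_cons, List.filter_cons]
  split_ifs <;> simp_all

lemma ascents_le_length (l : List ℕ) : ascents l ≤ l.length :=
  (List.length_filter_le _ _).trans (by simp)

lemma ascents_map {f : ℕ → ℕ} (hf : StrictMono f) (l : List ℕ) :
    ascents (l.map f) = ascents l := by
  simp only [ascents, ← List.map_tail, List.zip_map, List.filter_map, List.length_map]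
  congr 2
  funext p
  simp [hf.lt_iff_lt]

lemma ascents_cons_replicate {a c : ℕ} (h : c ≤ a) (j : ℕ) :
    ascents (a :: List.replicate j c) = 0 := by
  induction j generalizing a with
  | zero => rfl
  | succ j ih => simp [List.replicate_succ, ascents_cons_cons, ih le_rfl, Nat.not_lt.2 h]

lemma ascents_append_replicate {l : List ℕ} {c : ℕ} (h : ∀ a ∈ l.getLast?, c ≤ a)
    (j : ℕ) : ascents (l ++ List.replicate j c) = ascents l := by
  match l, j with
  | [], 0 => rfl
  | [], j + 1 => exact ascents_cons_replicate le_rfl j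
  | [a], j => exact ascents_cons_replicate (h a rfl) j
  | a :: b :: t, j =>
    rw [List.cons_append, List.cons_append, ascents_cons_cons, ← List.cons_append,
      ascents_append_replicate (l := b :: t) (by simpa using h), ascents_cons_cons]

/-- Each ascent ends in a nonzero letter other than the first one. -/
lemma count_zero_add_ascents_le_length (l : List ℕ) : l.count 0 + ascents l ≤ l.length := by
  have hasc : ascents l ≤ l.tail.countP (· ≠ 0) := by
    calc ascents l ≤ (l.zip l.tail).countP (fun p => p.2 ≠ 0) := by
          rw [ascents, ← List.countP_eq_length_filter]
          exact List.countP_mono_left (by simp; omega)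
      _ = ((l.zip l.tail).map Prod.snd).countP (· ≠ 0) := by rw [List.countP_map]; rfl
      _ = l.tail.countP (· ≠ 0) := by rw [List.map_snd_zip (by simp)]
  cases l with
  | nil => simp
  | cons a t =>
    have := List.length_eq_countP_add_countP (· == 0) (l := t)
    simp only [List.count, List.countP_cons, List.length_cons, List.tail_cons] at *
    simp at this hasc ⊢
    split_ifs <;> omega

lemma isAscentSeq_iff {x : List ℕ} :
    IsAscentSeq x ↔
      ∀ k (hk : k < x.length), x[k] ≤ if k = 0 then 0 else ascents (x.take k) + 1 := by
  constructor
  · rintro ⟨hhead, hstep⟩ k hk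
    split_ifs with h
    · subst h; exact (hhead hk).le
    · exact hstep ⟨k, hk⟩ (Nat.pos_of_ne_zero h)
  · intro h
    refine ⟨fun hx => Nat.le_zero.1 (by simpa using h 0 hx), fun ⟨k, hk⟩ hpos => ?_⟩
    simpa [Nat.pos_iff_ne_zero.1 hpos] using h k hk

lemma isAscentSeq_zero_cons_iff {y : List ℕ} :
    IsAscentSeq (0 :: y) ↔ ∀ k (hk : k < y.length), y[k] ≤ ascents (0 :: y.take k) + 1 := by
  rw [isAscentSeq_iff]
  refine ⟨fun h k hk => ?_, fun h k hk => ?_⟩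
  · have := h (k + 1) (by simpa using hk)
    simp only [Nat.add_one_ne_zero, if_false, List.take_succ_cons] at this
    exact this
  · cases k with
    | zero => simp
    | succ k => simpa using h k (by simpa using hk)

namespace IsAscentSeq

variable {x : List ℕ}

lemma head?_eq_zero (hx : IsAscentSeq x) (hne : x ≠ []) : x.head? = some 0 := by
  obtain ⟨a, t, rfl⟩ := List.exists_cons_of_ne_nil hne
  simpa using hx.1 (by simp)

lemma count_zero_pos (hx : IsAscentSeq x) (hne : x ≠ []) : 0 < x.count 0 :=
  List.count_pos_iff.2 (List.mem_of_mem_head? (hx.head?_eq_zero hne))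

lemma le_length (hx : IsAscentSeq x) : ∀ v ∈ x, v ≤ x.length := by
  intro v hv
  obtain ⟨k, hk, rfl⟩ := List.getElem_of_mem hv
  have := isAscentSeq_iff.1 hx k hk
  have := ascents_le_length (x.take k)
  split_ifs at * <;> simp at * <;> omega

end IsAscentSeq

lemma Contains.mono {p q t : List ℕ} (hpq : p <+ q) : Contains p t → Contains q t := by
  rintro ⟨f, hf, hiso⟩
  obtain ⟨e, he⟩ := List.sublist_iff_exists_fin_orderEmbedding_get_eq.1 hpq
  exact ⟨e ∘ f, e.strictMono.comp hf, fun i j => by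
    simp only [Function.comp_apply, ← he, hiso]⟩

lemma contains_map_iff {f : ℕ → ℕ} (hf : StrictMono f) {p t : List ℕ} :
    Contains (p.map f) t ↔ Contains p t := by
  constructor
  · rintro ⟨g, hg, hiso⟩
    refine ⟨Fin.cast (List.length_map f) ∘ g,
      (Fin.castOrderIso (List.length_map f)).strictMono.comp hg, fun i j => ?_⟩
    simpa [hf.lt_iff_lt] using hiso i j
  · rintro ⟨g, hg, hiso⟩
    refine ⟨Fin.cast (List.length_map f).symm ∘ g,
      (Fin.castOrderIso (List.length_map f).symm).strictMono.comp hg, fun i j => ?_⟩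
    simpa [hf.lt_iff_lt] using hiso i j

lemma contains_0012_iff {p : List ℕ} :
    Contains p [0, 0, 1, 2] ↔ ∃ a b c, a < b ∧ b < c ∧ [a, a, b, c] <+ p := by
  constructor
  · rintro ⟨f, hf, hiso⟩
    have h01 : p[(f 0 : ℕ)] = p[(f 1 : ℕ)] := by
      have := hiso 0 1
      have := hiso 1 0
      simp at *
      omega
    refine ⟨p.get (f 1), p.get (f 2), p.get (f 3), by simpa using (hiso 1 2).1,
      by simpa using (hiso 2 3).1, ?_⟩
    refine List.sublist_iff_exists_fin_orderEmbedding_get_eq.2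
      ⟨OrderEmbedding.ofStrictMono f hf, fun i => ?_⟩
    fin_cases i <;> simp [h01]
  · rintro ⟨a, b, c, hab, hbc, hsub⟩
    refine Contains.mono hsub ⟨id, strictMono_id, fun i j => ?_⟩
    fin_cases i <;> fin_cases j <;> simp <;> omega

def incRunLength : List ℕ → ℕ
  | [] => 0
  | [_] => 1
  | a :: b :: t => if a ≤ b then incRunLength (b :: t) + 1 else 1

lemma incRunLength_pos {l : List ℕ} (hl : l ≠ []) : 0 < incRunLength l := by
  match l with
  | [_] => simp [incRunLength]
  | _ :: _ :: _ => rw [incRunLength]; split_ifs <;> omega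

lemma incRunLength_le_length (l : List ℕ) : incRunLength l ≤ l.length := by
  match l with
  | [] => simp [incRunLength]
  | [_] => simp [incRunLength]
  | _ :: b :: t =>
    have := incRunLength_le_length (b :: t)
    rw [incRunLength]; simp only [List.length_cons] at *; split_ifs <;> omega

lemma isChain_take_iff_le_incRunLength {l : List ℕ} {k : ℕ} (hk : k ≤ l.length) :
    (l.take k).IsChain (· ≤ ·) ↔ k ≤ incRunLength l := by
  match l, k with
  | _, 0 => simp
  | [], _ + 1 => simp at hk
  | [_], 1 => simp [incRunLength]
  | [_], _ + 2 => simp at hk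
  | a :: b :: t, 1 =>
    simp only [List.take_succ_cons, List.take_zero, List.isChain_singleton, true_iff]
    exact incRunLength_pos (by simp)
  | a :: b :: t, k + 2 =>
    have ih := isChain_take_iff_le_incRunLength (l := b :: t) (k := k + 1) (by simpa using hk)
    rw [List.take_succ_cons, List.take_succ_cons, List.isChain_cons_cons, ← List.take_succ_cons,
      ih, incRunLength]
    split_ifs <;> simp [*]

lemma fwd_eq_incRunLength_reverse (l : List ℕ) : fwd l = incRunLength l.reverse := by
  have hP {k : ℕ} (hk : k ≤ l.length) :
      (l.drop (l.length - k)).IsChain (fun a b => b ≤ a) ↔ k ≤ incRunLength l.reverse := by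
    rw [← isChain_take_iff_le_incRunLength (by simpa using hk), ← List.isChain_reverse,
      List.reverse_drop, Nat.sub_sub_self hk]
  have hle : incRunLength l.reverse ≤ l.length := by simpa using incRunLength_le_length l.reverse
  rw [fwd, Nat.findGreatest_eq_iff]
  exact ⟨hle, fun _ => (hP hle).2 le_rfl, fun k hlt hk hc => absurd ((hP hk).1 hc) (by omega)⟩

lemma fwd_pos {x : List ℕ} (hx : x ≠ []) : 0 < fwd x := by
  rw [fwd_eq_incRunLength_reverse]
  exact incRunLength_pos (List.reverse_ne_nil_iff.2 hx)

lemma incRunLength_cons_of_le {a : ℕ} {l : List ℕ} (h : ∀ b ∈ l.head?, a ≤ b) :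
    incRunLength (a :: l) = incRunLength l + 1 := by
  cases l with
  | nil => rfl
  | cons b t => simp [incRunLength, h b rfl]

lemma incRunLength_replicate_append {c : ℕ} {s : List ℕ} (h : ∀ b ∈ s.head?, c ≤ b)
    (j : ℕ) : incRunLength (List.replicate j c ++ s) = incRunLength s + j := by
  induction j with
  | zero => simp
  | succ j ih =>
    rw [List.replicate_succ, List.cons_append, incRunLength_cons_of_le, ih, Nat.add_assoc]
    cases j with
    | zero => simpa using h
    | succ j => simp [List.replicate_succ]

lemma incRunLength_append_singleton {s : List ℕ} {a : ℕ} (hs : s ≠ [])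
    (h : a < s.getLast hs) : incRunLength (s ++ [a]) = incRunLength s := by
  match s with
  | [b] => simpa [incRunLength] using h
  | b :: c :: t =>
    have ih := incRunLength_append_singleton (s := c :: t) (by simp) (by simpa using h)
    simp only [List.cons_append, incRunLength] at ih ⊢
    rw [ih]

lemma incRunLength_map {f : ℕ → ℕ} (hf : StrictMono f) (l : List ℕ) :
    incRunLength (l.map f) = incRunLength l := by
  match l with
  | [] => rfl
  | [_] => rfl
  | a :: b :: t =>
    have ih := incRunLength_map hf (b :: t)
    simp only [List.map_cons, incRunLength] at ih ⊢
    simp only [ih, hf.le_iff_le]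

lemma ascents_zero_cons_map_add_one (z : List ℕ) :
    ascents (0 :: z.map (· + 1)) = if z = [] then 0 else ascents z + 1 := by
  cases z with
  | nil => rfl
  | cons a t =>
    have := ascents_map strictMono_add_one (a :: t)
    rw [List.map_cons] at this
    simp [ascents_cons_cons, this]

def glue (j : ℕ) (z : List ℕ) : List ℕ := 0 :: (z.map (· + 1) ++ List.replicate j 1)

def trailingOnes (x : List ℕ) : ℕ := (x.rtakeWhile (· == 1)).length

section glue

variable {j : ℕ} {z : List ℕ}

lemma length_glue : (glue j z).length = z.length + j + 1 := by
  simp [glue]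

lemma zero_notMem_glue_tail : 0 ∉ z.map (· + 1) ++ List.replicate j 1 := by
  simp [List.mem_replicate]

lemma count_zero_glue : (glue j z).count 0 = 1 := by
  rw [glue, List.count_cons_self, List.count_eq_zero.2 zero_notMem_glue_tail]

lemma count_one_glue : (glue j z).count 1 = z.count 0 + j := by
  have := List.count_map_of_injective z (· + 1) (add_left_injective 1) 0
  simp [glue, this]

lemma glue_injective : Function.Injective (glue j) := fun _ _ h =>
  (List.map_injective_iff.2 (add_left_injective 1))
    (List.append_cancel_right (List.cons_injective h))

lemma ascents_glue (hz : z ≠ []) : ascents (glue j z) = ascents z + 1 := by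
  rw [glue, ← List.cons_append, ascents_append_replicate, ascents_zero_cons_map_add_one,
    if_neg hz]
  intro a ha
  rw [List.getLast?_cons, List.getLast?_map, List.getLast?_eq_some_getLast hz] at ha
  simp at ha
  omega

lemma ascents_glue_nil_le : ascents (glue j []) ≤ 1 := by
  cases j with
  | zero => exact Nat.zero_le 1
  | succ j =>
    simp only [glue, List.map_nil, List.nil_append, List.replicate_succ, ascents_cons_cons,
      ascents_cons_replicate le_rfl]
    simp

lemma fwd_glue (hz : z ≠ []) : fwd (glue j z) = fwd z + j := by
  have hrev : (glue j z).reverse = List.replicate j 1 ++ (z.reverse.map (· + 1) ++ [0]) := by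
    simp [glue, List.map_reverse]
  have hne : z.reverse.map (· + 1) ≠ [] := by simpa using hz
  rw [fwd_eq_incRunLength_reverse, fwd_eq_incRunLength_reverse, hrev,
    incRunLength_replicate_append, incRunLength_append_singleton hne,
    incRunLength_map strictMono_add_one]
  · simp
  · intro b hb
    obtain ⟨a, t, hat⟩ := List.exists_cons_of_ne_nil (List.reverse_ne_nil_iff.2 hz)
    simp [hat] at hb
    omega

lemma getLast?_glue_ne_zero (hz : z ≠ []) : (glue j z).getLast? ≠ some 0 := by
  have hne : z.map (· + 1) ++ List.replicate j 1 ≠ [] := by simp [hz]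
  intro h
  rw [glue, List.getLast?_cons, Option.some_inj, List.getLast?_eq_some_getLast hne,
    Option.getD_some] at h
  exact zero_notMem_glue_tail (h ▸ List.getLast_mem hne)

lemma trailingOnes_glue (hz : z.getLast? ≠ some 0) : trailingOnes (glue j z) = j := by
  have hbase : (0 :: z.map (· + 1)).rtakeWhile (· == 1) = [] := by
    rw [List.rtakeWhile_eq_nil_iff]
    intro _
    rcases z.eq_nil_or_concat with rfl | ⟨L, b, rfl⟩
    · simp
    · simp at hz ⊢
      omega
  rw [trailingOnes, glue, ← List.cons_append]
  induction j with
  | zero => simp [hbase]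
  | succ j ih =>
    rw [List.replicate_succ', ← List.append_assoc, List.rtakeWhile_concat_pos _ _ _ rfl,
      List.length_append, ih, List.length_singleton]

lemma isAscentSeq_glue_iff : IsAscentSeq (glue j z) ↔ IsAscentSeq z := by
  have key (k : ℕ) (hk : k < z.length) :
      (z.map (· + 1) ++ List.replicate j 1)[k]'(by simp; omega) ≤
          ascents (0 :: (z.map (· + 1) ++ List.replicate j 1).take k) + 1 ↔
        z[k] ≤ if k = 0 then 0 else ascents (z.take k) + 1 := by
    have hzk : z.take k = [] ↔ k = 0 := by
      simp [List.take_eq_nil_iff, List.ne_nil_of_length_pos (by omega : 0 < z.length)]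
    rw [List.getElem_append_left (by simpa), List.getElem_map,
      List.take_append_of_le_length (by simp; omega), ← List.map_take,
      ascents_zero_cons_map_add_one]
    split_ifs <;> simp_all
  rw [glue, isAscentSeq_zero_cons_iff, isAscentSeq_iff]
  constructor
  · intro h k hk
    exact (key k hk).1 (h k (by simp; omega))
  · intro h k hk
    by_cases hkz : k < z.length
    · exact (key k hkz).2 (h k hkz)
    · rw [List.getElem_append_right (by simpa using hkz)]
      simp

lemma contains_0012_glue_iff : Contains (glue j z) [0, 0, 1, 2] ↔ Contains z [0, 0, 1, 2] := by
  rw [← contains_map_iff strictMono_add_one (p := z)]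
  refine ⟨fun h => ?_, Contains.mono ((List.sublist_append_left _ _).cons 0)⟩
  obtain ⟨a, b, c, hab, hbc, hsub⟩ := contains_0012_iff.1 h
  have ha : a ≠ 0 := by
    rintro rfl
    have := hsub.count_le 0
    simp [count_zero_glue] at this
  have hc : c ∉ List.replicate j 1 := by
    simp [List.mem_replicate]
    omega
  exact contains_0012_iff.2 ⟨a, b, c, hab, hbc,
    sublist_left_of_append_singleton_sublist_append (s := [a, a, b]) (hsub.of_cons_of_ne ha) hc⟩

end glue

lemma exists_eq_glue {x : List ℕ} (h0 : x.head? = some 0) (hc : x.count 0 = 1) :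
    ∃ z, z.getLast? ≠ some 0 ∧ x = glue (trailingOnes x) z := by
  obtain ⟨y, rfl⟩ : ∃ y, x = 0 :: y := by
    obtain ⟨a, y, rfl⟩ :=
      List.exists_cons_of_ne_nil (List.ne_nil_of_mem (List.mem_of_mem_head? h0))
    exact ⟨y, by simpa using h0⟩
  have hy : 0 ∉ y := List.count_eq_zero.1 (by simpa using hc)
  have hne : (0 :: y).rdropWhile (· == 1) ≠ [] := by simp [List.rdropWhile_eq_nil_iff]
  obtain ⟨s, hs⟩ : ∃ s, (0 :: y).rdropWhile (· == 1) = 0 :: s := by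
    rcases List.prefix_cons_iff.1 (List.rdropWhile_prefix _ _) with h | ⟨s, h, -⟩
    · exact absurd h hne
    · exact ⟨s, h⟩
  have hlast : (0 :: s).getLast (List.cons_ne_nil 0 s) ≠ 1 := by
    have := List.rdropWhile_last_not _ _ hne
    simp_rw [hs] at this
    simpa using this
  have hrep : (0 :: y).rtakeWhile (· == 1) = List.replicate (trailingOnes (0 :: y)) 1 :=
    List.eq_replicate_iff.2 ⟨rfl, fun b hb => by simpa using List.mem_rtakeWhile_imp hb⟩
  have hy' : y = s ++ List.replicate (trailingOnes (0 :: y)) 1 := by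
    have := List.rdropWhile_append_rtakeWhile (p := (· == 1)) (l := 0 :: y)
    rw [hs, hrep, List.cons_append, List.cons.injEq] at this
    exact this.2.symm
  have hs0 : ∀ v ∈ s, v ≠ 0 := fun v hv h => hy (h ▸ hy' ▸ List.mem_append_left _ hv)
  refine ⟨s.map (· - 1), ?_, ?_⟩
  · rcases s.eq_nil_or_concat with rfl | ⟨L, v, rfl⟩
    · simp
    · have := hs0 v (by simp)
      simp at hlast ⊢
      omega
  · have hpred : ∀ v ∈ s, ((· + 1) ∘ (· - 1)) v = id v := fun v hv => by
      simp only [Function.comp_apply, id_eq]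
      have := hs0 v hv
      omega
    rw [glue, List.map_map, List.map_congr_left hpred, List.map_id, ← hy']

def bseqSet (n m r ℓ : ℕ) : Set (List ℕ) :=
  {x : List ℕ | x.length = n ∧ IsAscentSeq x ∧ Avoids x [0, 0, 1, 2] ∧
    x.getLast? ≠ some 0 ∧ ascents x = m ∧ x.count 0 = r ∧ fwd x = ℓ}

lemma bseq_eq_ncard_bseqSet (n m r ℓ : ℕ) : bseq n m r ℓ = (bseqSet n m r ℓ).ncard := rfl

lemma finite_bseqSet (n m r ℓ : ℕ) : (bseqSet n m r ℓ).Finite := by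
  refine ((List.finite_length_eq (Fin (n + 1)) n).image (List.map Fin.val)).subset ?_
  rintro x ⟨rfl, hx, -⟩
  refine ⟨x.pmap (fun v hv => ⟨v, Nat.lt_succ_of_le hv⟩) hx.le_length, by simp, ?_⟩
  simp [List.map_pmap]

section bseqSet

variable {n m ℓ : ℕ}

lemma glue_mem_bseqSet {i j : ℕ} {z : List ℕ} (hm : 2 ≤ m)
    (hz : z ∈ bseqSet (n - j - 1) (m - 1) (i - j) (ℓ - j)) :
    glue j z ∈ bseqSet n m 1 ℓ ∧ (glue j z).count 1 = i ∧ trailingOnes (glue j z) = j := by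
  obtain ⟨hlen, hasc, hav, hlast, hasc_eq, hcount, hfwd⟩ := hz
  have hne : z ≠ [] := by
    rintro rfl
    simp at hasc_eq
    omega
  have := hasc.count_zero_pos hne
  have := fwd_pos hne
  have := List.length_pos_iff.2 hne
  refine ⟨⟨?_, isAscentSeq_glue_iff.2 hasc, (not_congr contains_0012_glue_iff).2 hav,
    getLast?_glue_ne_zero hne, ?_, count_zero_glue, ?_⟩, ?_, trailingOnes_glue hlast⟩
  · rw [length_glue]; omega
  · rw [ascents_glue hne]; omega
  · rw [fwd_glue hne]; omega
  · rw [count_one_glue]; omega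

lemma exists_glue_of_mem_bseqSet {x : List ℕ} (hm : 2 ≤ m) (hx : x ∈ bseqSet n m 1 ℓ) :
    ∃ z ∈ bseqSet (n - trailingOnes x - 1) (m - 1) (x.count 1 - trailingOnes x)
        (ℓ - trailingOnes x),
      x = glue (trailingOnes x) z ∧ trailingOnes x < x.count 1 ∧ trailingOnes x < ℓ ∧
        x.count 1 ≤ n - m := by
  obtain ⟨hlen, hasc, hav, hlast, hasc_eq, hcount, hfwd⟩ := hx
  have hx0 : x ≠ [] := by
    rintro rfl
    simp at hasc_eq
    omega
  obtain ⟨z, hz0, hxz⟩ := exists_eq_glue (hasc.head?_eq_zero hx0) hcount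
  generalize trailingOnes x = j at hxz ⊢
  subst hxz
  have hne : z ≠ [] := by
    rintro rfl
    have := ascents_glue_nil_le (j := j)
    omega
  rw [length_glue] at hlen
  rw [ascents_glue hne] at hasc_eq
  rw [fwd_glue hne] at hfwd
  have hasc' := isAscentSeq_glue_iff.1 hasc
  have := hasc'.count_zero_pos hne
  have := fwd_pos hne
  have := count_zero_add_ascents_le_length z
  have := count_one_glue (j := j) (z := z)
  refine ⟨z, ⟨?_, hasc', (not_congr contains_0012_glue_iff).1 hav, hz0, ?_, ?_, ?_⟩,
    rfl, ?_, ?_, ?_⟩ <;> omega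

lemma bseqSet_fiber_eq_image_glue (hm : 2 ≤ m) (i j : ℕ) :
    bseqSet n m 1 ℓ ∩ {x | x.count 1 = i} ∩ {x | trailingOnes x = j} =
      glue j '' bseqSet (n - j - 1) (m - 1) (i - j) (ℓ - j) := by
  ext x
  constructor
  · rintro ⟨⟨hx, rfl⟩, rfl⟩
    obtain ⟨z, hz, hxz, -⟩ := exists_glue_of_mem_bseqSet hm hx
    exact ⟨z, hz, hxz.symm⟩
  · rintro ⟨z, hz, rfl⟩
    obtain ⟨hmem, hcount, htrail⟩ := glue_mem_bseqSet hm hz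
    exact ⟨⟨hmem, hcount⟩, htrail⟩

lemma count_one_mem_Icc_of_mem_bseqSet {x : List ℕ} (hm : 2 ≤ m)
    (hx : x ∈ bseqSet n m 1 ℓ) : x.count 1 ∈ Finset.Icc 1 (n - m) := by
  obtain ⟨-, -, -, h, -, h'⟩ := exists_glue_of_mem_bseqSet hm hx
  rw [Finset.mem_Icc]
  omega

lemma trailingOnes_mem_Icc_of_mem_bseqSet {x : List ℕ} (hm : 2 ≤ m)
    (hx : x ∈ bseqSet n m 1 ℓ) :
    trailingOnes x ∈ Finset.Icc 0 (min (x.count 1 - 1) (ℓ - 1)) := by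
  obtain ⟨-, -, -, h, h', -⟩ := exists_glue_of_mem_bseqSet hm hx
  rw [Finset.mem_Icc]
  omega

end bseqSet

theorem bseq_rec_r_eq_one_general (n m ℓ : ℕ) (hm : 2 ≤ m) :
    bseq n m 1 ℓ
      = ∑ i ∈ Finset.Icc 1 (n - m), ∑ j ∈ Finset.Icc 0 (min (i - 1) (ℓ - 1)),
          bseq (n - j - 1) (m - 1) (i - j) (ℓ - j) := by
  have hfin := finite_bseqSet n m 1 ℓ
  rw [bseq_eq_ncard_bseqSet,
    Set.ncard_eq_sum_ncard_fiber hfin fun _ hx => count_one_mem_Icc_of_mem_bseqSet hm hx]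
  refine Finset.sum_congr rfl fun i _ => ?_
  rw [Set.ncard_eq_sum_ncard_fiber (hfin.subset Set.inter_subset_left)
    fun _ hx => hx.2 ▸ trailingOnes_mem_Icc_of_mem_bseqSet hm hx.1]
  refine Finset.sum_congr rfl fun j _ => ?_
  rw [bseqSet_fiber_eq_image_glue hm, Set.ncard_image_of_injective _ glue_injective]
  rfl

/-- Recurrence for `b_{n,m,1,ℓ}` when `n ≥ 3` and `m ≥ 2`:
`b_{n,m,1,ℓ} = Σ_{i=1}^{n-m} Σ_{j=0}^{min(i-1,ℓ-1)} b_{n-j-1,m-1,i-j,ℓ-j}`. -/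
theorem bseq_rec_r_eq_one (n m ℓ : ℕ) (hn : 3 ≤ n) (hm : 2 ≤ m) (hℓ : 1 ≤ ℓ) :
    bseq n m 1 ℓ
      = ∑ i ∈ Finset.Icc 1 (n - m), ∑ j ∈ Finset.Icc 0 (min (i - 1) (ℓ - 1)),
          bseq (n - j - 1) (m - 1) (i - j) (ℓ - j) :=
  bseq_rec_r_eq_one_general n m ℓ hm
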